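/- Let f be a moving phantom mechanism for m = 3 projects with phantom system Y = {y_k(t) : k = 0,…,n}, and let V be a three-type profile described by the division x = (x_1,x_2,x_3) with x_j > 0 for all j ∈ [3], counts a_j of single-minded voters toward project j, counts b_{k,j} of double-minded voters proposing value 1 − x_k on project j and x_k on project k, and C fully-satisfied voters proposing x. Let z_j = a_j + Σ_{k ≠ j} b_{k,j} and q_j = Σ_{k ≠ j} b_{j,k}. Then f(V) = x if and only if y_{z_j}(t*) ≤ x_j ≤ y_{z_j + q_j + C}(t*) for every j ∈ [3], for any t* ∈ [0,1] at which the sum over the three projects of the medians of the voter reports together with the phantom values y_k(t*) equals 1. -/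

import Mathlib

/-!
The median of `2n+1` reals is `≤ v` iff at least `n+1` of them are `≤ v`, and `≥ v` iff at least
`n+1` of them are `≥ v`. As the phantoms `y_0(t) ≤ … ≤ y_n(t)` are sorted, the phantom median on a
project therefore equals `v` iff `y_w(t) ≤ v ≤ y_{w'}(t)`, where `w` and `w'` count the voters
reporting more than `v`, resp. at least `v`, on that project. In a three-type profile with positive
target `x`, the voters reporting more than `x_j` on project `j` are the single-minded voters for `j`
and the double-minded voters proposing `1 - x_k` on `j` (`z_j` of them), and those reporting exactly
`x_j` are the fully-satisfied voters and the double-minded voters proposing `x_j` on `j`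
(`C + q_j` of them); positivity of `x` keeps all these values pairwise distinct.
-/

open Finset

/-- A division among `m` projects: coordinates in `[0,1]` summing to `1`. -/
def IsDivision {m : ℕ} (x : Fin m → ℝ) : Prop :=
  (∀ j, 0 ≤ x j ∧ x j ≤ 1) ∧ ∑ j, x j = 1

/-- The ℓ1 distance between two vectors over `Fin m`. -/
noncomputable def l1 {m : ℕ} (x y : Fin m → ℝ) : ℝ := ∑ j, |x j - y j|

/-- The proportional division (coordinatewise mean) of a profile. -/
noncomputable def propDiv {n m : ℕ} (V : Fin n → Fin m → ℝ) : Fin m → ℝ :=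
  fun j => (∑ i, V i j) / (n : ℝ)

/-- The `(k+1)`-th smallest element of a multiset of reals. -/
noncomputable def medianAt (s : Multiset ℝ) (k : ℕ) : ℝ :=
  (s.sort (· ≤ ·)).getD k 0

/-- Voter reports on project `j` together with the `n+1` phantom values `p 0, …, p n`. -/
noncomputable def projValues {n m : ℕ} (V : Fin n → Fin m → ℝ)
    (p : ℕ → ℝ) (j : Fin m) : Multiset ℝ :=
  (Multiset.map (fun i => V i j) Finset.univ.val) +
    (Multiset.map p (Finset.range (n + 1)).val)

/-- The median (the `(n+1)`-th smallest of the `2n+1` values) of the `n` voter reports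
on project `j` together with the `n+1` phantom values. -/
noncomputable def phantomMedian {n m : ℕ} (V : Fin n → Fin m → ℝ)
    (p : ℕ → ℝ) (j : Fin m) : ℝ :=
  medianAt (projValues V p j) n

/-- A phantom system for `n` voters: continuous, weakly increasing functions
`y k : [0,1] → [0,1]`, `k = 0, …, n`, with `y k 0 = 0`, `y k 1 = 1`,
pointwise ordered in `k`. -/
structure PhantomSystem (n : ℕ) where
  y : ℕ → ℝ → ℝ
  contOn : ∀ k ≤ n, ContinuousOn (y k) (Set.Icc 0 1)
  monoOn : ∀ k ≤ n, MonotoneOn (y k) (Set.Icc 0 1)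
  mem_Icc : ∀ k ≤ n, ∀ t ∈ Set.Icc (0:ℝ) 1, y k t ∈ Set.Icc (0:ℝ) 1
  map_zero : ∀ k ≤ n, y k 0 = 0
  map_one : ∀ k ≤ n, y k 1 = 1
  mono_idx : ∀ t ∈ Set.Icc (0:ℝ) 1, ∀ k k', k ≤ k' → k' ≤ n → y k t ≤ y k' t

/-- `f` is the moving phantom mechanism associated with the phantom system `Y`:
on each profile of divisions, for some `t*` making the medians sum to `1`,
it outputs on each project the median of the voter reports and the phantom values. -/
def IsMovingPhantom {n m : ℕ} (f : (Fin n → Fin m → ℝ) → (Fin m → ℝ))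
    (Y : PhantomSystem n) : Prop :=
  ∀ V : Fin n → Fin m → ℝ, (∀ i, IsDivision (V i)) →
    ∃ t ∈ Set.Icc (0:ℝ) 1,
      (∑ j, phantomMedian V (fun k => Y.y k t) j) = 1 ∧
      ∀ j, f V j = phantomMedian V (fun k => Y.y k t) j

/-- Truthfulness of a budget aggregation mechanism: no voter `i` with true peak `V i`
can get an outcome closer (in ℓ1 distance) to her peak by reporting some division `v`
instead of `V i`. -/
def Truthful {n m : ℕ} (f : (Fin n → Fin m → ℝ) → (Fin m → ℝ)) : Prop :=
  ∀ V : Fin n → Fin m → ℝ, (∀ i, IsDivision (V i)) →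
    ∀ i : Fin n, ∀ v : Fin m → ℝ, IsDivision v →
      l1 (f V) (V i) ≤ l1 (f (Function.update V i v)) (V i)

/-- The ℓ1-loss of mechanism `f` on profile `V`. -/
noncomputable def loss {n m : ℕ} (f : (Fin n → Fin m → ℝ) → (Fin m → ℝ))
    (V : Fin n → Fin m → ℝ) : ℝ :=
  l1 (f V) (propDiv V)

/-- The phantom system of the Piecewise Uniform mechanism for `n` voters. -/
noncomputable def puPhantom (n : ℕ) (k : ℕ) (t : ℝ) : ℝ :=
  if t < 1 / 2 then
    (if (k : ℝ) / (n : ℝ) < 1 / 2 then 0 else 4 * t * (k : ℝ) / (n : ℝ) - 2 * t)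
  else
    (if (k : ℝ) / (n : ℝ) < 1 / 2 then (k : ℝ) * (2 * t - 1) / (n : ℝ)
     else (k : ℝ) * (3 - 2 * t) / (n : ℝ) - 2 + 2 * t)

/-- `w` is an output of the Piecewise Uniform mechanism on profile `V`. -/
def IsPUOutcome {n m : ℕ} (V : Fin n → Fin m → ℝ) (w : Fin m → ℝ) : Prop :=
  ∃ t ∈ Set.Icc (0:ℝ) 1,
    (∑ j, phantomMedian V (fun k => puPhantom n k t) j) = 1 ∧
    ∀ j, w j = phantomMedian V (fun k => puPhantom n k t) j

/-- `w` is an output of the Independent Markets mechanism (phantoms `min (k·t) 1`)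
on profile `V`. -/
def IsIMOutcome {n m : ℕ} (V : Fin n → Fin m → ℝ) (w : Fin m → ℝ) : Prop :=
  ∃ t : ℝ, 0 ≤ t ∧
    (∑ j, phantomMedian V (fun k => min ((k : ℝ) * t) 1) j) = 1 ∧
    ∀ j, w j = phantomMedian V (fun k => min ((k : ℝ) * t) 1) j

/-- A single-minded division: it assigns the whole budget to one project. -/
def SingleMindedDiv {m : ℕ} (v : Fin m → ℝ) : Prop := ∃ j, v j = 1

/-- A double-minded division relative to an outcome `w` (three projects): it agrees with
`w` on one project `j`, proposes `1 - w j` on another project, and `0` on the third. -/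
def DoubleMindedDiv (w v : Fin 3 → ℝ) : Prop :=
  ∃ j j' : Fin 3, j ≠ j' ∧ v j = w j ∧ v j' = 1 - w j ∧
    ∀ k, k ≠ j → k ≠ j' → v k = 0

/-- A three-type profile for mechanism `f`: each voter is fully-satisfied,
double-minded, or single-minded. -/
def ThreeTypeProfile {n : ℕ} (f : (Fin n → Fin 3 → ℝ) → (Fin 3 → ℝ))
    (V : Fin n → Fin 3 → ℝ) : Prop :=
  ∀ i, V i = f V ∨ DoubleMindedDiv (f V) (V i) ∨ SingleMindedDiv (V i)

/-- The single-minded division fully supporting project `j`. -/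
noncomputable def singleDiv (j : Fin 3) : Fin 3 → ℝ :=
  fun j' => if j' = j then 1 else 0

/-- The double-minded division proposing `x k` on project `k`, `1 - x k` on
project `j` and `0` on the remaining project. -/
noncomputable def doubleDiv (x : Fin 3 → ℝ) (k j : Fin 3) : Fin 3 → ℝ :=
  fun j' => if j' = k then x k else if j' = j then 1 - x k else 0

/-- A utilitarian mechanism: it always returns a division minimizing the total
ℓ1 distance (social cost) to the voters' proposals. -/
def Utilitarian {n m : ℕ} (f : (Fin n → Fin m → ℝ) → (Fin m → ℝ)) : Prop :=
  ∀ V : Fin n → Fin m → ℝ, (∀ i, IsDivision (V i)) →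
    IsDivision (f V) ∧
    ∀ x : Fin m → ℝ, IsDivision x → (∑ i, l1 (V i) (f V)) ≤ ∑ i, l1 (V i) x

namespace List

theorem Pairwise.lt_countP_iff {α : Type*} [Preorder α] {l : List α}
    (hl : l.Pairwise (· ≤ ·)) {p : α → Bool} (hp : ∀ ⦃a b⦄, a ≤ b → p b → p a)
    {k : ℕ} (hk : k < l.length) : k < l.countP p ↔ p l[k] := by
  induction l generalizing k with
  | nil => simp at hk
  | cons a l ih =>
    obtain ⟨ha_le, hl⟩ := pairwise_cons.1 hl
    by_cases ha : p a
    · cases k with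
      | zero => simp [ha]
      | succ k => simpa [ha] using ih hl (by simpa using hk)
    · have hl0 : l.countP p = 0 :=
        countP_eq_zero.2 fun b hb hpb => ha (hp (ha_le b hb) hpb)
      cases k with
      | zero => simp [ha, hl0]
      | succ k => simpa [ha, hl0] using fun h => ha (hp (ha_le _ (getElem_mem _)) h)

variable {α : Type*} [LinearOrder α] {l : List α} {k : ℕ}

theorem Pairwise.getElem_le_iff (hl : l.Pairwise (· ≤ ·)) (hk : k < l.length) (v : α) :
    l[k] ≤ v ↔ k < l.countP (· ≤ v) := by
  simpa using (hl.lt_countP_iff (p := (· ≤ v)) (by simpa using fun a b h hb => h.trans hb) hk).symm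

theorem Pairwise.le_getElem_iff (hl : l.Pairwise (· ≤ ·)) (hk : k < l.length) (v : α) :
    v ≤ l[k] ↔ l.length - k ≤ l.countP (v ≤ ·) := by
  have hsplit := l.length_eq_countP_add_countP (· < v)
  have hlt := hl.lt_countP_iff (p := (· < v)) (by simpa using fun a b h hb => h.trans_lt hb) hk
  simp only [decide_eq_true_eq, not_lt] at hsplit hlt
  rw [← not_lt, ← hlt]
  omega

end List

theorem medianAt_eq_getElem {s : Multiset ℝ} {k : ℕ} (hk : k < Multiset.card s) :
    medianAt s k = (s.sort (· ≤ ·))[k]'(by rwa [Multiset.length_sort]) :=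
  List.getD_eq_getElem _ _ _

theorem medianAt_le_iff {s : Multiset ℝ} {k : ℕ} (hk : k < Multiset.card s) (v : ℝ) :
    medianAt s k ≤ v ↔ k < s.countP (· ≤ v) := by
  conv_rhs => rw [← Multiset.sort_eq s (· ≤ ·), Multiset.coe_countP]
  rw [medianAt_eq_getElem hk]
  exact (Multiset.pairwise_sort s _).getElem_le_iff _ v

theorem le_medianAt_iff {s : Multiset ℝ} {k : ℕ} (hk : k < Multiset.card s) (v : ℝ) :
    v ≤ medianAt s k ↔ Multiset.card s - k ≤ s.countP (v ≤ ·) := by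
  conv_rhs => rw [← Multiset.sort_eq s (· ≤ ·), Multiset.coe_countP, Multiset.coe_card]
  rw [medianAt_eq_getElem hk]
  exact (Multiset.pairwise_sort s _).le_getElem_iff _ v

section Phantoms

variable {n : ℕ} {p : ℕ → ℝ} {w : ℕ}

theorem pairwise_map_range_le (hp : ∀ k k', k ≤ k' → k' ≤ n → p k ≤ p k') :
    ((List.range (n + 1)).map p).Pairwise (· ≤ ·) :=
  List.pairwise_map.2 <| List.pairwise_lt_range.imp_of_mem fun _ hb hab =>
    hp _ _ hab.le (Nat.lt_succ_iff.1 (List.mem_range.1 hb))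

theorem le_iff_lt_countP_map_range (hp : ∀ k k', k ≤ k' → k' ≤ n → p k ≤ p k')
    (hw : w ≤ n) (v : ℝ) :
    p w ≤ v ↔ w < (Multiset.map p (range (n + 1)).val).countP (· ≤ v) := by
  rw [range_val, Multiset.range, Multiset.map_coe, Multiset.coe_countP]
  have h := (pairwise_map_range_le hp).getElem_le_iff (k := w) (by simpa using hw) v
  rwa [List.getElem_map, List.getElem_range] at h

theorem le_iff_le_countP_map_range (hp : ∀ k k', k ≤ k' → k' ≤ n → p k ≤ p k')
    (hw : w ≤ n) (v : ℝ) :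
    v ≤ p w ↔ n + 1 - w ≤ (Multiset.map p (range (n + 1)).val).countP (v ≤ ·) := by
  rw [range_val, Multiset.range, Multiset.map_coe, Multiset.coe_countP]
  have h := (pairwise_map_range_le hp).le_getElem_iff (k := w) (by simpa using hw) v
  rwa [List.getElem_map, List.getElem_range, List.length_map, List.length_range] at h

end Phantoms

theorem countP_map_univ_val {n m : ℕ} (V : Fin n → Fin m → ℝ) (j : Fin m) (P : ℝ → Prop)
    [DecidablePred P] :
    (Multiset.map (fun i => V i j) univ.val).countP P = #{i | P (V i j)} :=
  Multiset.countP_map _ _ _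

theorem phantomMedian_eq_iff {n m : ℕ} (V : Fin n → Fin m → ℝ) {p : ℕ → ℝ}
    (hp : ∀ k k', k ≤ k' → k' ≤ n → p k ≤ p k') (j : Fin m) (v : ℝ) :
    phantomMedian V p j = v ↔ p #{i | v < V i j} ≤ v ∧ v ≤ p #{i | v ≤ V i j} := by
  have hcard : Multiset.card (projValues V p j) = 2 * n + 1 := by
    rw [projValues, Multiset.card_add, Multiset.card_map, Multiset.card_map, card_val, card_val,
      card_univ, Fintype.card_fin, card_range]
    ring
  have hlt_le : #{i | v < V i j} ≤ n := (card_filter_le _ _).trans_eq (card_fin n)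
  have hle_le : #{i | v ≤ V i j} ≤ n := (card_filter_le _ _).trans_eq (card_fin n)
  have hcompl : #{i | V i j ≤ v} + #{i | v < V i j} = n := by
    simpa [not_le] using card_filter_add_card_filter_not (s := univ) (fun i => V i j ≤ v)
  rw [phantomMedian, le_antisymm_iff, medianAt_le_iff (by omega), le_medianAt_iff (by omega),
    le_iff_lt_countP_map_range hp hlt_le, le_iff_le_countP_map_range hp hle_le, hcard,
    projValues, Multiset.countP_add, Multiset.countP_add, countP_map_univ_val,
    countP_map_univ_val]
  omega

theorem add_lt_one_of_ne {ι : Type*} [Fintype ι] {x : ι → ℝ} (hpos : ∀ i, 0 < x i)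
    (hsum : ∑ i, x i = 1) (hcard : 2 < Fintype.card ι) {j k : ι} (hjk : j ≠ k) :
    x j + x k < 1 := by
  classical
  obtain ⟨m, -, hm⟩ := exists_mem_notMem_of_card_lt_card (s := {j, k}) (t := univ)
    (by rwa [card_pair hjk, card_univ])
  rw [← hsum, ← sum_pair hjk]
  exact sum_lt_sum_of_subset (subset_univ _) (mem_univ m) hm (hpos m) fun i _ _ => (hpos i).le

section ThreeProjects

variable {x : Fin 3 → ℝ}

theorem lt_one_of_pos_of_sum_eq_one (hpos : ∀ i, 0 < x i) (hsum : ∑ i, x i = 1) (j : Fin 3) :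
    x j < 1 := by
  obtain ⟨k, hk⟩ := exists_ne j
  linarith [add_lt_one_of_ne hpos hsum (by simp) hk.symm, hpos k]

def IsThreeTypeDivision (x u : Fin 3 → ℝ) : Prop :=
  u = x ∨ (∃ j, u = singleDiv j) ∨ ∃ k j : Fin 3, k ≠ j ∧ u = doubleDiv x k j

open Classical in
theorem lt_apply_iff_mem {u : Fin 3 → ℝ} (hu : IsThreeTypeDivision x u)
    (hpos : ∀ i, 0 < x i) (hsum : ∑ i, x i = 1) (j : Fin 3) :
    x j < u j ↔ u ∈ insert (singleDiv j) ((univ.erase j).image (doubleDiv x · j)) := by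
  have hxj := lt_one_of_pos_of_sum_eq_one hpos hsum j
  simp only [mem_insert, mem_image, mem_erase, mem_univ, and_true]
  constructor
  · rcases hu with rfl | ⟨j', rfl⟩ | ⟨k, j', hkj', rfl⟩ <;> intro h
    · exact absurd h (lt_irrefl _)
    · by_cases hj : j = j'
      · exact Or.inl (hj ▸ rfl)
      · simp only [singleDiv, hj, ↓reduceIte] at h
        linarith [hpos j]
    · by_cases hjk : j = k
      · subst hjk; simp [doubleDiv] at h
      by_cases hj : j = j'
      · exact Or.inr ⟨k, fun h => hjk h.symm, hj ▸ rfl⟩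
      · simp only [doubleDiv, hjk, hj, ↓reduceIte] at h
        linarith [hpos j]
  · rintro (rfl | ⟨k, hkj, rfl⟩)
    · simpa [singleDiv] using hxj
    · simp only [doubleDiv, if_neg hkj.symm, if_true]
      linarith [add_lt_one_of_ne hpos hsum (by simp) hkj.symm]

open Classical in
theorem apply_eq_iff_mem {u : Fin 3 → ℝ} (hu : IsThreeTypeDivision x u)
    (hpos : ∀ i, 0 < x i) (hsum : ∑ i, x i = 1) (j : Fin 3) :
    u j = x j ↔ u ∈ insert x ((univ.erase j).image (doubleDiv x j)) := by
  have hxj := lt_one_of_pos_of_sum_eq_one hpos hsum j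
  simp only [mem_insert, mem_image, mem_erase, mem_univ, and_true]
  constructor
  · rcases hu with rfl | ⟨j', rfl⟩ | ⟨k, j', hkj', rfl⟩ <;> intro h
    · exact Or.inl rfl
    · simp only [singleDiv] at h; split_ifs at h <;> linarith [hpos j]
    · by_cases hjk : j = k
      · subst hjk; exact Or.inr ⟨j', hkj'.symm, rfl⟩
      by_cases hj : j = j'
      · subst hj
        simp only [doubleDiv, hjk, ↓reduceIte] at h
        linarith [add_lt_one_of_ne hpos hsum (by simp) hjk]
      · simp only [doubleDiv, hjk, hj, ↓reduceIte] at h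
        linarith [hpos j]
  · rintro (rfl | ⟨k, -, rfl⟩)
    · rfl
    · simp [doubleDiv]

theorem doubleDiv_injOn_left (hpos : ∀ i, 0 < x i) (j : Fin 3) :
    Set.InjOn (doubleDiv x · j) (univ.erase j) := by
  intro k hk k' _ h
  by_contra hne
  have := congrFun h k
  simp only [doubleDiv, hne, (mem_erase.1 hk).1, ↓reduceIte] at this
  linarith [hpos k]

theorem doubleDiv_injOn_right (hpos : ∀ i, 0 < x i) (hsum : ∑ i, x i = 1) (j : Fin 3) :
    Set.InjOn (doubleDiv x j) (univ.erase j) := by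
  intro k hk k' _ h
  by_contra hne
  have := congrFun h k
  simp only [doubleDiv, hne, (mem_erase.1 hk).1, ↓reduceIte] at this
  linarith [lt_one_of_pos_of_sum_eq_one hpos hsum j]

open Classical in
theorem singleDiv_notMem_image_doubleDiv (hpos : ∀ i, 0 < x i) (j : Fin 3) :
    singleDiv j ∉ (univ.erase j).image (doubleDiv x · j) := by
  simp only [mem_image, mem_erase, mem_univ, and_true, not_exists, not_and]
  intro k hkj h
  have := congrFun h k
  simp only [doubleDiv, singleDiv, hkj, ↓reduceIte] at this
  linarith [hpos k]

open Classical in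
theorem notMem_image_doubleDiv (hpos : ∀ i, 0 < x i) (hsum : ∑ i, x i = 1) (j : Fin 3) :
    x ∉ (univ.erase j).image (doubleDiv x j) := by
  simp only [mem_image, mem_erase, mem_univ, and_true, not_exists, not_and]
  intro k hkj h
  have := congrFun h k
  simp only [doubleDiv, hkj, ↓reduceIte] at this
  linarith [add_lt_one_of_ne hpos hsum (by simp) hkj.symm]

variable {n : ℕ} {V : Fin n → Fin 3 → ℝ}

open Classical in
theorem card_filter_lt_apply (hall : ∀ i, IsThreeTypeDivision x (V i)) (hpos : ∀ i, 0 < x i)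
    (hsum : ∑ i, x i = 1) (j : Fin 3) :
    #{i | x j < V i j} =
      #{i | V i = singleDiv j} + ∑ k ∈ univ.erase j, #{i | V i = doubleDiv x k j} := by
  rw [filter_congr fun i _ => lt_apply_iff_mem (hall i) hpos hsum j,
    ← sum_card_fiberwise_eq_card_filter, sum_insert (singleDiv_notMem_image_doubleDiv hpos j),
    sum_image (doubleDiv_injOn_left hpos j)]

open Classical in
theorem card_filter_apply_eq (hall : ∀ i, IsThreeTypeDivision x (V i)) (hpos : ∀ i, 0 < x i)
    (hsum : ∑ i, x i = 1) (j : Fin 3) :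
    #{i | V i j = x j} = #{i | V i = x} + ∑ k ∈ univ.erase j, #{i | V i = doubleDiv x j k} := by
  rw [filter_congr fun i _ => apply_eq_iff_mem (hall i) hpos hsum j,
    ← sum_card_fiberwise_eq_card_filter, sum_insert (notMem_image_doubleDiv hpos hsum j),
    sum_image (doubleDiv_injOn_right hpos hsum j)]

end ThreeProjects

theorem card_filter_le_eq_lt_add_eq {ι : Type*} [Fintype ι] (f : ι → ℝ) (v : ℝ) :
    #{i | v ≤ f i} = #{i | v < f i} + #{i | f i = v} := by
  classical
  rw [← card_union_of_disjoint (disjoint_filter.2 fun i _ h h' => h.ne' h'), ← filter_or]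
  simp only [le_iff_lt_or_eq, eq_comm]

theorem three_type_characterization_general {n : ℕ}
    (Y : PhantomSystem n)
    (x : Fin 3 → ℝ) (hx : IsDivision x) (hxpos : ∀ j, 0 < x j)
    (V : Fin n → Fin 3 → ℝ)
    (a : Fin 3 → ℕ) (b : Fin 3 → Fin 3 → ℕ) (C : ℕ)
    (hall : ∀ i, V i = x ∨ (∃ j, V i = singleDiv j) ∨
        ∃ k j : Fin 3, k ≠ j ∧ V i = doubleDiv x k j)
    (hC : C = Nat.card {i : Fin n // V i = x})
    (ha : ∀ j, a j = Nat.card {i : Fin n // V i = singleDiv j})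
    (hb : ∀ k j : Fin 3, k ≠ j → b k j = Nat.card {i : Fin n // V i = doubleDiv x k j})
    (t : ℝ) (ht : t ∈ Set.Icc (0:ℝ) 1) :
    ((∀ j, phantomMedian V (fun k => Y.y k t) j = x j) ↔
      ∀ j : Fin 3,
        Y.y (a j + ∑ k ∈ Finset.univ.erase j, b k j) t ≤ x j ∧
        x j ≤ Y.y ((a j + ∑ k ∈ Finset.univ.erase j, b k j) +
                   (∑ k ∈ Finset.univ.erase j, b j k) + C) t) := by
  classical
  have hcard : ∀ u, Nat.card {i : Fin n // V i = u} = #{i | V i = u} := fun u => by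
    rw [Nat.card_eq_fintype_card, Fintype.card_subtype]
  refine forall_congr' fun j => ?_
  have hgt : #{i | x j < V i j} = a j + ∑ k ∈ univ.erase j, b k j := by
    rw [card_filter_lt_apply hall hxpos hx.2 j, ha, hcard]
    exact congrArg _ (sum_congr rfl fun k hk => by rw [hb k j (mem_erase.1 hk).1, hcard])
  have heq : #{i | V i j = x j} = C + ∑ k ∈ univ.erase j, b j k := by
    rw [card_filter_apply_eq hall hxpos hx.2 j, hC, hcard]
    exact congrArg _ (sum_congr rfl fun k hk => by rw [hb j k (mem_erase.1 hk).1.symm, hcard])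
  rw [phantomMedian_eq_iff V (fun k k' => Y.mono_idx t ht k k') j, card_filter_le_eq_lt_add_eq, hgt, heq,
    add_comm C, ← add_assoc]

/-- Characterization of three-type profiles: for a moving phantom system
`Y`, a target division `x` with all coordinates positive, and a three-type profile with
`C` fully-satisfied voters, `a j` single-minded voters for project `j` and `b k j`
double-minded voters proposing `x k` on project `k` and `1 - x k` on project `j`,
the medians at a feasible `t*` equal `x` iff
`y (z j) t* ≤ x j ≤ y (z j + q j + C) t*` for every project `j`. -/
theorem three_type_characterization {n : ℕ} (hn : 1 ≤ n)
    (Y : PhantomSystem n)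
    (x : Fin 3 → ℝ) (hx : IsDivision x) (hxpos : ∀ j, 0 < x j)
    (V : Fin n → Fin 3 → ℝ)
    (a : Fin 3 → ℕ) (b : Fin 3 → Fin 3 → ℕ) (C : ℕ)
    (hall : ∀ i, V i = x ∨ (∃ j, V i = singleDiv j) ∨
        ∃ k j : Fin 3, k ≠ j ∧ V i = doubleDiv x k j)
    (hC : C = Nat.card {i : Fin n // V i = x})
    (ha : ∀ j, a j = Nat.card {i : Fin n // V i = singleDiv j})
    (hb : ∀ k j : Fin 3, k ≠ j → b k j = Nat.card {i : Fin n // V i = doubleDiv x k j})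
    (t : ℝ) (ht : t ∈ Set.Icc (0:ℝ) 1)
    (hfeas : ∑ j, phantomMedian V (fun k => Y.y k t) j = 1) :
    ((∀ j, phantomMedian V (fun k => Y.y k t) j = x j) ↔
      ∀ j : Fin 3,
        Y.y (a j + ∑ k ∈ Finset.univ.erase j, b k j) t ≤ x j ∧
        x j ≤ Y.y ((a j + ∑ k ∈ Finset.univ.erase j, b k j) +
                   (∑ k ∈ Finset.univ.erase j, b j k) + C) t) :=
  three_type_characterization_general Y x hx hxpos V a b C hall hC ha hb t ht
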